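/- Let X, Y be compact metric spaces, μ ∈ P(X), ν ∈ P(Y), c continuous on X × Y, and c̃(x,λ) = ∫_Y c dλ. For every Λ ∈ P(P(Y)) with barycenter ν, the unconstrained Kantorovich value satisfies MK(c,μ,ν) ≤ MK(c̃, μ, Λ), where MK(c̃,μ,Λ) is the Kantorovich problem between μ and Λ on X × P(Y) with cost c̃. Explicitly: for any π̃ ∈ Π(μ,Λ) with disintegration π̃ = N(x) ⊗ μ, the map f(x) = ∫_{P(Y)} λ dN(x)(λ) defines a plan f ⊗ μ ∈ Π(μ,ν) with ∫_{X×Y} c d(f⊗μ) = ∫_{X×P(Y)} c̃ dπ̃. -/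

import Mathlib

open MeasureTheory

noncomputable instance {α : Type*} [MeasurableSpace α] [TopologicalSpace α]
    [OpensMeasurableSpace α] : MeasurableSpace (ProbabilityMeasure α) := borel _

instance {α : Type*} [MeasurableSpace α] [TopologicalSpace α]
    [OpensMeasurableSpace α] : BorelSpace (ProbabilityMeasure α) := ⟨rfl⟩

/-- The plan `f(x) ⊗ μ` with disintegration fibers `f x`. -/
noncomputable def plan {X Z : Type*} [MeasurableSpace X] [MeasurableSpace Z]
    (μ : Measure X) (f : X → ProbabilityMeasure Z) : Measure (X × Z) :=
  μ.bind fun x => ((f x : Measure Z)).map (Prod.mk x)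

/-!
Sampling a measure `l` on `Y` from a plan `π̃ ∈ Π(μ, Λ)` and then a point `y` from `l` gives a plan
in `Π(μ, ν)`: its second marginal is the barycenter `ν` of `Λ`, and by Fubini its `c`-cost is the
`c̃`-cost of `π̃`. For `π̃ = N ⊗ μ` this composite plan is `f ⊗ μ`, since `f x` is the barycenter of
`N x`.
-/

open ProbabilityTheory Filter
open scoped ENNReal

namespace MeasureTheory.ProbabilityMeasure

variable {Ω : Type*} [TopologicalSpace Ω] [MeasurableSpace Ω]

/-- `l F` is a limit of integrals of bounded continuous functions against `l`, each continuous
in `l`. -/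
lemma measurable_apply_of_isClosed [OpensMeasurableSpace Ω] [HasOuterApproxClosed Ω]
    {F : Set Ω} (hF : IsClosed F) :
    Measurable fun l : ProbabilityMeasure Ω => (l : Measure Ω) F := by
  refine ENNReal.measurable_of_tendsto (fun n => ?_)
    (tendsto_pi_nhds.2 fun l => HasOuterApproxClosed.tendsto_lintegral_apprSeq hF (l : Measure Ω))
  convert (ENNReal.continuous_coe.comp (continuous_testAgainstNN_eval (hF.apprSeq n))).measurable
    using 1
  exact funext fun l => (FiniteMeasure.testAgainstNN_coe_eq (μ := l.toFiniteMeasure)).symm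

lemma measurable_toMeasure [BorelSpace Ω] [HasOuterApproxClosed Ω] :
    Measurable fun l : ProbabilityMeasure Ω => (l : Measure Ω) :=
  .measure_of_isPiSystem_of_isProbabilityMeasure
    (BorelSpace.measurable_eq.trans borel_eq_generateFrom_isClosed) isPiSystem_isClosed
    fun _ hF => measurable_apply_of_isClosed hF

end MeasureTheory.ProbabilityMeasure

section Plan

variable {X Z : Type*} [MeasurableSpace X] [MeasurableSpace Z]
  {f : X → ProbabilityMeasure Z} (hf : Measurable fun x => (f x : Measure Z))

noncomputable def markovKernel : Kernel X Z := ⟨fun x => f x, hf⟩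

instance : IsMarkovKernel (markovKernel hf) :=
  ⟨fun x => inferInstanceAs (IsProbabilityMeasure (f x : Measure Z))⟩

include hf

lemma plan_eq_compProd (μ : Measure X) [SFinite μ] : plan μ f = μ ⊗ₘ markovKernel hf := by
  have hmap : Measurable fun x => (f x : Measure Z).map (Prod.mk x) :=
    Measure.measurable_of_measurable_coe _ fun t ht => by
      simp only [Measure.map_apply measurable_prodMk_left ht]
      exact Kernel.measurable_kernel_prodMk_left (κ := markovKernel hf) ht
  ext s hs
  rw [plan, Measure.bind_apply hs hmap.aemeasurable, Measure.compProd_apply hs]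
  simp only [Measure.map_apply measurable_prodMk_left hs]
  rfl

lemma isProbabilityMeasure_plan (μ : Measure X) [IsProbabilityMeasure μ] :
    IsProbabilityMeasure (plan μ f) := by
  rw [plan_eq_compProd hf]
  infer_instance

lemma map_fst_plan (μ : Measure X) [SFinite μ] : (plan μ f).map Prod.fst = μ := by
  rw [plan_eq_compProd hf]
  exact Measure.fst_compProd μ _

lemma lintegral_plan (μ : Measure X) [SFinite μ] {g : X × Z → ℝ≥0∞} (hg : Measurable g) :
    ∫⁻ p, g p ∂plan μ f = ∫⁻ x, ∫⁻ z, g (x, z) ∂(f x : Measure Z) ∂μ := by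
  rw [plan_eq_compProd hf, Measure.lintegral_compProd hg]
  rfl

lemma map_snd_plan_apply (μ : Measure X) [SFinite μ] {s : Set Z} (hs : MeasurableSet s) :
    (plan μ f).map Prod.snd s = ∫⁻ x, (f x : Measure Z) s ∂μ := by
  rw [Measure.map_apply measurable_snd hs, plan_eq_compProd hf,
    Measure.compProd_apply (measurable_snd hs)]
  rfl

lemma integral_plan {E : Type*} [NormedAddCommGroup E] [NormedSpace ℝ E]
    (μ : Measure X) [SFinite μ] {g : X × Z → E} (hg : Integrable g (plan μ f)) :
    ∫ p, g p ∂plan μ f = ∫ x, ∫ z, g (x, z) ∂(f x : Measure Z) ∂μ := by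
  rw [plan_eq_compProd hf] at hg ⊢
  exact Measure.integral_compProd hg

end Plan

section Barycenter

variable {Ω : Type*} [TopologicalSpace Ω] [MeasurableSpace Ω] [BorelSpace Ω]
  [HasOuterApproxClosed Ω]

lemma lintegral_apply_map_snd {X : Type*} [MeasurableSpace X]
    (P : Measure (X × ProbabilityMeasure Ω)) {s : Set Ω} (hs : MeasurableSet s) :
    ∫⁻ p, (p.2 : Measure Ω) s ∂P = ∫⁻ l, (l : Measure Ω) s ∂(P.map Prod.snd) :=
  (lintegral_map ((Measure.measurable_coe hs).comp ProbabilityMeasure.measurable_toMeasure)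
    measurable_snd).symm

/-- The barycenter of `Ξ` is `(plan Ξ id).map Prod.snd`, so Fubini applies to it. -/
lemma integral_eq_integral_integral_of_barycenter {E : Type*} [NormedAddCommGroup E]
    [NormedSpace ℝ E] {m : Measure Ω} {Ξ : Measure (ProbabilityMeasure Ω)} [SFinite Ξ]
    (hm : ∀ s, MeasurableSet s → m s = ∫⁻ l, (l : Measure Ω) s ∂Ξ) {g : Ω → E}
    (hg : Integrable g m) :
    ∫ y, g y ∂m = ∫ l, ∫ y, g y ∂(l : Measure Ω) ∂Ξ := by
  have hid : Measurable fun l => ((id l : ProbabilityMeasure Ω) : Measure Ω) :=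
    ProbabilityMeasure.measurable_toMeasure
  obtain rfl : m = (plan Ξ id).map Prod.snd :=
    Measure.ext fun s hs => by rw [hm s hs, map_snd_plan_apply hid Ξ hs]; rfl
  rw [integral_map measurable_snd.aemeasurable hg.1]
  exact integral_plan hid Ξ ((integrable_map_measure hg.1 measurable_snd.aemeasurable).1 hg)

end Barycenter

lemma norm_integral_le_of_forall_norm_le {α E : Type*} [MeasurableSpace α] [NormedAddCommGroup E]
    [NormedSpace ℝ E] {μ : Measure α} [IsProbabilityMeasure μ] {g : α → E} {C : ℝ}
    (hC : ∀ a, ‖g a‖ ≤ C) : ‖∫ a, g a ∂μ‖ ≤ C := by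
  simpa using norm_integral_le_of_norm_le_const (μ := μ) (Eventually.of_forall hC)

section Transport

variable {X Y : Type*} [MeasurableSpace X] [TopologicalSpace Y] [MeasurableSpace Y]
  [BorelSpace Y] [HasOuterApproxClosed Y] {μ : Measure X} {ν : Measure Y}
  {Λ : Measure (ProbabilityMeasure Y)} {c : X → Y → ℝ} {C : ℝ}

theorem exists_plan_integral_eq_of_barycenter
    (hbar : ∀ s, MeasurableSet s → ν s = ∫⁻ l, (l : Measure Y) s ∂Λ)
    (hc : Measurable fun p : X × Y => c p.1 p.2) (hC : ∀ x y, ‖c x y‖ ≤ C)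
    (πt : Measure (X × ProbabilityMeasure Y)) [IsProbabilityMeasure πt]
    (h1 : πt.map Prod.fst = μ) (h2 : πt.map Prod.snd = Λ) :
    ∃ π : Measure (X × Y), π.map Prod.fst = μ ∧ π.map Prod.snd = ν ∧
      ∫ p, c p.1 p.2 ∂π = ∫ p, ∫ y, c p.1 y ∂(p.2 : Measure Y) ∂πt := by
  have hsnd : Measurable fun p : X × ProbabilityMeasure Y => (p.2 : Measure Y) :=
    ProbabilityMeasure.measurable_toMeasure.comp measurable_snd
  have := isProbabilityMeasure_plan hsnd πt
  have hφ : Measurable fun q : (X × ProbabilityMeasure Y) × Y => (q.1.1, q.2) := by fun_prop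
  refine ⟨(plan πt Prod.snd).map fun q => (q.1.1, q.2), ?_, ?_, ?_⟩
  · calc _ = ((plan πt Prod.snd).map Prod.fst).map Prod.fst := by
          rw [Measure.map_map measurable_fst hφ, Measure.map_map measurable_fst measurable_fst]
          rfl
      _ = μ := by rw [map_fst_plan hsnd πt, h1]
  · have hmap_snd : ((plan πt Prod.snd).map fun q => (q.1.1, q.2)).map Prod.snd =
        (plan πt Prod.snd).map Prod.snd := by
      rw [Measure.map_map measurable_snd hφ]
      rfl
    ext s hs
    rw [hmap_snd, map_snd_plan_apply hsnd πt hs, hbar s hs, ← h2, lintegral_apply_map_snd πt hs]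
  · rw [integral_map hφ.aemeasurable hc.aestronglyMeasurable]
    exact integral_plan hsnd πt <| .of_bound (hc.comp hφ).aestronglyMeasurable C <|
      Eventually.of_forall fun q => hC _ _

variable {N : X → ProbabilityMeasure (ProbabilityMeasure Y)} {f : X → ProbabilityMeasure Y}
  (hN : Measurable fun x => (N x : Measure (ProbabilityMeasure Y)))
  (hf : Measurable fun x => (f x : Measure Y))
  (hfbar : ∀ x s, MeasurableSet s →
    (f x : Measure Y) s = ∫⁻ l, (l : Measure Y) s ∂(N x : Measure (ProbabilityMeasure Y)))
include hN hf hfbar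

theorem map_snd_plan_of_barycenter [SFinite μ]
    (hbar : ∀ s, MeasurableSet s → ν s = ∫⁻ l, (l : Measure Y) s ∂Λ)
    (hNsnd : (plan μ N).map Prod.snd = Λ) : (plan μ f).map Prod.snd = ν := by
  ext s hs
  have hs' : Measurable fun p : X × ProbabilityMeasure Y => (p.2 : Measure Y) s :=
    ((Measure.measurable_coe hs).comp ProbabilityMeasure.measurable_toMeasure).comp measurable_snd
  rw [map_snd_plan_apply hf μ hs, hbar s hs, ← hNsnd, ← lintegral_apply_map_snd _ hs,
    lintegral_plan hN μ hs']
  exact lintegral_congr fun x => hfbar x s hs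

theorem integral_plan_of_barycenter [IsProbabilityMeasure μ]
    (hc : Measurable fun p : X × Y => c p.1 p.2) (hC : ∀ x y, ‖c x y‖ ≤ C) :
    ∫ p, c p.1 p.2 ∂plan μ f = ∫ p, ∫ y, c p.1 y ∂(p.2 : Measure Y) ∂plan μ N := by
  have := isProbabilityMeasure_plan hf μ
  have := isProbabilityMeasure_plan hN μ
  have hc' : StronglyMeasurable fun p : X × ProbabilityMeasure Y =>
      ∫ y, c p.1 y ∂(p.2 : Measure Y) :=
    (hc.comp (measurable_fst.fst.prodMk measurable_snd)).stronglyMeasurable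
      |>.integral_kernel_prod_right'
        (κ := markovKernel (ProbabilityMeasure.measurable_toMeasure.comp measurable_snd))
  rw [integral_plan hf μ <| .of_bound hc.aestronglyMeasurable C <|
      Eventually.of_forall fun p => hC p.1 p.2,
    integral_plan hN μ <| .of_bound hc'.aestronglyMeasurable C <|
      Eventually.of_forall fun p => norm_integral_le_of_forall_norm_le (hC p.1)]
  refine integral_congr_ae (Eventually.of_forall fun x => ?_)
  exact integral_eq_integral_integral_of_barycenter (hfbar x) <|
    .of_bound (hc.comp measurable_prodMk_left).aestronglyMeasurable C (Eventually.of_forall (hC x))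

end Transport

theorem stmt11_general {X Y : Type*}
    [MetricSpace X] [CompactSpace X] [MeasurableSpace X] [BorelSpace X]
    [MetricSpace Y] [CompactSpace Y] [MeasurableSpace Y] [BorelSpace Y]
    (μ : Measure X) [IsProbabilityMeasure μ]
    (ν : Measure Y)
    (c : X → Y → ℝ) (hc : Continuous fun p : X × Y => c p.1 p.2)
    (Λ : Measure (ProbabilityMeasure Y)) [IsProbabilityMeasure Λ]
    (hbar : ∀ s : Set Y, MeasurableSet s → ν s = ∫⁻ l, (l : Measure Y) s ∂Λ) :
    sInf {r : ℝ | ∃ π : Measure (X × Y),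
        π.map Prod.fst = μ ∧ π.map Prod.snd = ν ∧ r = ∫ p, c p.1 p.2 ∂π} ≤
      sInf {r : ℝ | ∃ πt : Measure (X × ProbabilityMeasure Y),
        πt.map Prod.fst = μ ∧ πt.map Prod.snd = Λ ∧
        r = ∫ p, (∫ y, c p.1 y ∂(p.2 : Measure Y)) ∂πt} ∧
    ∀ (N : X → ProbabilityMeasure (ProbabilityMeasure Y)), Measurable N →
      (plan μ N).map Prod.fst = μ → (plan μ N).map Prod.snd = Λ →
      ∀ f : X → ProbabilityMeasure Y, Measurable f →
        (∀ x, ∀ s : Set Y, MeasurableSet s →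
          (f x : Measure Y) s = ∫⁻ l, (l : Measure Y) s ∂(N x : Measure (ProbabilityMeasure Y))) →
        (plan μ f).map Prod.fst = μ ∧ (plan μ f).map Prod.snd = ν ∧
          (∫ p, c p.1 p.2 ∂(plan μ f)) =
            ∫ p, (∫ y, c p.1 y ∂(p.2 : Measure Y)) ∂(plan μ N) := by
  obtain ⟨C, hC⟩ := isCompact_univ.exists_bound_of_continuousOn hc.continuousOn
  replace hC : ∀ x y, ‖c x y‖ ≤ C := fun x y => hC (x, y) trivial
  refine ⟨csInf_le_csInf ⟨-C, ?_⟩ ⟨_, μ.prod Λ, by simp, by simp, rfl⟩ ?_, ?_⟩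
  · rintro r ⟨π, hπ, -, rfl⟩
    have := (Measure.isProbabilityMeasure_map_iff measurable_fst.aemeasurable).1 (by rwa [hπ])
    exact neg_le_of_abs_le (norm_integral_le_of_forall_norm_le fun p : X × Y => hC p.1 p.2)
  · rintro r ⟨πt, h1, h2, rfl⟩
    have := (Measure.isProbabilityMeasure_map_iff measurable_fst.aemeasurable).1 (by rwa [h1])
    obtain ⟨π, hπ⟩ := exists_plan_integral_eq_of_barycenter hbar hc.measurable hC πt h1 h2
    exact ⟨π, hπ.1, hπ.2.1, hπ.2.2.symm⟩
  · intro N hN _ hNsnd f hf hfbar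
    have hN' := ProbabilityMeasure.measurable_toMeasure.comp hN
    have hf' := ProbabilityMeasure.measurable_toMeasure.comp hf
    exact ⟨map_fst_plan hf' μ, map_snd_plan_of_barycenter hN' hf' hfbar hbar hNsnd,
      integral_plan_of_barycenter hN' hf' hfbar hc.measurable hC⟩

/-- Let `X, Y` be compact metric, `c` continuous,
`c̃(x,λ) = ∫_Y c dλ`, and `Λ ∈ P(P(Y))` with barycenter `ν`.  Then
`MK(c,μ,ν) ≤ MK(c̃,μ,Λ)`.  Explicitly: for any `π̃ ∈ Π(μ,Λ)` with disintegration
`π̃ = N(x) ⊗ μ`, the generalized barycenter map `f(x) = ∫_{P(Y)} λ dN(x)(λ)` defines a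
plan `f ⊗ μ ∈ Π(μ,ν)` with `∫_{X×Y} c d(f ⊗ μ) = ∫_{X×P(Y)} c̃ dπ̃`. -/
theorem stmt11 {X Y : Type*}
    [MetricSpace X] [CompactSpace X] [MeasurableSpace X] [BorelSpace X]
    [MetricSpace Y] [CompactSpace Y] [MeasurableSpace Y] [BorelSpace Y]
    (μ : Measure X) [IsProbabilityMeasure μ]
    (ν : Measure Y) [IsProbabilityMeasure ν]
    (c : X → Y → ℝ) (hc : Continuous fun p : X × Y => c p.1 p.2)
    (Λ : Measure (ProbabilityMeasure Y)) [IsProbabilityMeasure Λ]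
    (hbar : ∀ s : Set Y, MeasurableSet s → ν s = ∫⁻ l, (l : Measure Y) s ∂Λ) :
    sInf {r : ℝ | ∃ π : Measure (X × Y),
        π.map Prod.fst = μ ∧ π.map Prod.snd = ν ∧ r = ∫ p, c p.1 p.2 ∂π} ≤
      sInf {r : ℝ | ∃ πt : Measure (X × ProbabilityMeasure Y),
        πt.map Prod.fst = μ ∧ πt.map Prod.snd = Λ ∧
        r = ∫ p, (∫ y, c p.1 y ∂(p.2 : Measure Y)) ∂πt} ∧
    ∀ (N : X → ProbabilityMeasure (ProbabilityMeasure Y)), Measurable N →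
      (plan μ N).map Prod.fst = μ → (plan μ N).map Prod.snd = Λ →
      ∀ f : X → ProbabilityMeasure Y, Measurable f →
        (∀ x, ∀ s : Set Y, MeasurableSet s →
          (f x : Measure Y) s = ∫⁻ l, (l : Measure Y) s ∂(N x : Measure (ProbabilityMeasure Y))) →
        (plan μ f).map Prod.fst = μ ∧ (plan μ f).map Prod.snd = ν ∧
          (∫ p, c p.1 p.2 ∂(plan μ f)) =
            ∫ p, (∫ y, c p.1 y ∂(p.2 : Measure Y)) ∂(plan μ N) :=
  stmt11_general μ ν c hc Λ hbar
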